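/- If the true ramping limits ν_min, ν_max : Φ → ℝ are continuous on a compact set Φ ⊂ ℝ^δ with ν_min(φ) < ν_max(φ) for all φ, then for every ε > 0 there exist piecewise-affine (hence continuous) functions p_min, p_max with ν_min ≤ p_min ≤ p_max ≤ ν_max on Φ and coverage (p_max(φ) - p_min(φ))/(ν_max(φ) - ν_min(φ)) ≥ 1 - ε for all φ ∈ Φ. -/

import Mathlib

/-!
Piecewise-affine functions form a lattice containing the affine functions, and affine functions
separate the points of `ℝ^d`; by the lattice form of the Stone–Weierstrass theorem their
restrictions are therefore dense in `C(Φ, ℝ)`. Let `m > 0` be the minimal gap `νmax - νmin`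
on `Φ` and `4δ ≤ min 1 ε * m`. Approximating `νmin + δ` and `νmax - δ` within `δ` gives
`νmin ≤ pmin ≤ νmin + 2δ` and `νmax - 2δ ≤ pmax ≤ νmax`, so the band loses at most
`4δ ≤ ε m ≤ ε (νmax - νmin)` of its width.
-/

def IsPWA {d : ℕ} (f : (Fin d → ℝ) → ℝ) : Prop :=
  ∃ (m n : ℕ) (a : Fin (m + 1) → Fin (n + 1) → (Fin d → ℝ))
    (b : Fin (m + 1) → Fin (n + 1) → ℝ),
    ∀ x, f x = Finset.univ.sup' Finset.univ_nonempty
      (fun i => Finset.univ.inf' Finset.univ_nonempty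
        (fun j => (∑ k, a i j k * x k) + b i j))

open Finset

section PiecewiseAffine

variable {d : ℕ}

lemma isPWA_of_fintype {ι κ : Type*} [Fintype ι] [Fintype κ] [Nonempty ι] [Nonempty κ]
    (a : ι → κ → Fin d → ℝ) (b : ι → κ → ℝ) {f : (Fin d → ℝ) → ℝ}
    (hf : ∀ x, f x = univ.sup' univ_nonempty fun i =>
      univ.inf' univ_nonempty fun j => (∑ k, a i j k * x k) + b i j) :
    IsPWA f := by
  obtain ⟨m, hm⟩ := Nat.exists_eq_succ_of_ne_zero (Fintype.card_ne_zero (α := ι))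
  obtain ⟨n, hn⟩ := Nat.exists_eq_succ_of_ne_zero (Fintype.card_ne_zero (α := κ))
  let e : Fin (m + 1) ≃ ι := (Fintype.equivFinOfCardEq hm).symm
  let e' : Fin (n + 1) ≃ κ := (Fintype.equivFinOfCardEq hn).symm
  refine ⟨m, n, fun i j => a (e i) (e' j), fun i j => b (e i) (e' j), fun x => ?_⟩
  rw [hf x]
  refine eq_of_forall_ge_iff fun c => ?_
  simp [sup'_le_iff, inf'_le_iff, e.forall_congr_left, e'.exists_congr_left]

lemma IsPWA.max {f g : (Fin d → ℝ) → ℝ} (hf : IsPWA f) (hg : IsPWA g) :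
    IsPWA fun x => max (f x) (g x) := by
  obtain ⟨m, n, a, b, hf⟩ := hf
  obtain ⟨m', n', a', b', hg⟩ := hg
  refine isPWA_of_fintype (ι := Fin (m + 1) ⊕ Fin (m' + 1)) (κ := Fin (n + 1) × Fin (n' + 1))
    (Sum.elim (fun i j => a i j.1) (fun i j => a' i j.2))
    (Sum.elim (fun i j => b i j.1) (fun i j => b' i j.2)) fun x => ?_
  rw [hf x, hg x]
  refine eq_of_forall_ge_iff fun c => ?_
  simp [sup'_le_iff, inf'_le_iff, Sum.forall, Prod.exists]

lemma IsPWA.min {f g : (Fin d → ℝ) → ℝ} (hf : IsPWA f) (hg : IsPWA g) :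
    IsPWA fun x => min (f x) (g x) := by
  obtain ⟨m, n, a, b, hf⟩ := hf
  obtain ⟨m', n', a', b', hg⟩ := hg
  refine isPWA_of_fintype (ι := Fin (m + 1) × Fin (m' + 1)) (κ := Fin (n + 1) ⊕ Fin (n' + 1))
    (fun i => Sum.elim (a i.1) (a' i.2)) (fun i => Sum.elim (b i.1) (b' i.2)) fun x => ?_
  rw [hf x, hg x]
  refine eq_of_forall_le_iff fun c => ?_
  simp [le_sup'_iff, le_inf'_iff, Sum.forall, Prod.exists]

lemma isPWA_const (c : ℝ) : IsPWA fun _ : Fin d → ℝ => c :=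
  ⟨0, 0, fun _ _ => 0, fun _ _ => c, fun x => by simp⟩

lemma isPWA_mul_apply_add (k : Fin d) (c e : ℝ) : IsPWA fun x => c * x k + e :=
  ⟨0, 0, fun _ _ => Pi.single k c, fun _ _ => e, fun x => by simp [Pi.single_apply]⟩

lemma exists_mul_apply_add_eq_eq {x y : Fin d → ℝ} (hxy : x ≠ y) (s t : ℝ) :
    ∃ (k : Fin d) (c e : ℝ), c * x k + e = s ∧ c * y k + e = t := by
  obtain ⟨k, hk⟩ := Function.ne_iff.mp hxy
  refine ⟨k, (s - t) / (x k - y k), t - (s - t) / (x k - y k) * y k, ?_, by ring⟩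
  field_simp [sub_ne_zero.mpr hk]
  ring

lemma closure_setOf_isPWA_restrict_eq_top (Φ : Set (Fin d → ℝ)) [CompactSpace Φ] :
    closure {F : C(Φ, ℝ) | ∃ p : (Fin d → ℝ) → ℝ, IsPWA p ∧ ∀ x : Φ, F x = p x} = ⊤ := by
  refine ContinuousMap.sublattice_closure_eq_top _ ⟨0, 0, isPWA_const 0, fun _ => rfl⟩ ?_ ?_ ?_
  · rintro F ⟨p, hp, hFp⟩ G ⟨q, hq, hGq⟩
    exact ⟨_, hp.min hq, fun x => by simp [hFp, hGq]⟩
  · rintro F ⟨p, hp, hFp⟩ G ⟨q, hq, hGq⟩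
    exact ⟨_, hp.max hq, fun x => by simp [hFp, hGq]⟩
  · intro v x y
    by_cases hxy : x = y
    · exact ⟨ContinuousMap.const _ (v x), ⟨_, isPWA_const (v x), fun _ => rfl⟩, rfl, hxy ▸ rfl⟩
    obtain ⟨k, c, e, hx, hy⟩ :=
      exists_mul_apply_add_eq_eq (Subtype.coe_injective.ne hxy) (v x) (v y)
    refine ⟨⟨fun z => c * (z : Fin d → ℝ) k + e, ?_⟩, ⟨_, isPWA_mul_apply_add k c e, fun _ => rfl⟩,
      hx, hy⟩
    exact (continuous_const.mul ((continuous_apply k).comp continuous_subtype_val)).add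
      continuous_const

lemma exists_isPWA_abs_sub_lt {Φ : Set (Fin d → ℝ)} (hΦ : IsCompact Φ)
    {g : (Fin d → ℝ) → ℝ} (hg : ContinuousOn g Φ) {δ : ℝ} (hδ : 0 < δ) :
    ∃ p, IsPWA p ∧ ∀ φ ∈ Φ, |p φ - g φ| < δ := by
  have : CompactSpace Φ := isCompact_iff_compactSpace.mp hΦ
  let G : C(Φ, ℝ) := ⟨Φ.domRestrict g, hg.domRestrict⟩
  have hG : G ∈ closure {F : C(Φ, ℝ) | ∃ p : (Fin d → ℝ) → ℝ, IsPWA p ∧ ∀ x : Φ, F x = p x} := by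
    rw [closure_setOf_isPWA_restrict_eq_top]
    trivial
  obtain ⟨F, ⟨p, hp, hFp⟩, hGF⟩ := Metric.mem_closure_iff.mp hG δ hδ
  refine ⟨p, hp, fun φ hφ => ?_⟩
  have := (ContinuousMap.dist_apply_le_dist ⟨φ, hφ⟩).trans_lt (dist_comm G F ▸ hGF)
  rw [hFp, Real.dist_eq] at this
  exact this

end PiecewiseAffine

lemma bounds_and_coverage_of_abs_sub_lt {lo hi p q δ ε m : ℝ} (hm : 0 < m) (hgap : m ≤ hi - lo)
    (hδ : 4 * δ ≤ min 1 ε * m) (hp : |p - (lo + δ)| < δ) (hq : |q - (hi - δ)| < δ) :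
    lo ≤ p ∧ p ≤ q ∧ q ≤ hi ∧ 1 - ε ≤ (q - p) / (hi - lo) := by
  have hδm : 4 * δ ≤ m := hδ.trans (mul_le_of_le_one_left hm.le (min_le_left 1 ε))
  have hδε : 4 * δ ≤ ε * m := hδ.trans (mul_le_mul_of_nonneg_right (min_le_right 1 ε) hm.le)
  obtain ⟨hp₁, hp₂⟩ := abs_lt.mp hp
  obtain ⟨hq₁, hq₂⟩ := abs_lt.mp hq
  have hε : 0 ≤ ε := by nlinarith
  refine ⟨by linarith, by linarith, by linarith, ?_⟩
  rw [le_div_iff₀ (by linarith)]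
  nlinarith

/-- Continuous ramping limits with a strict gap on a compact set can be conservatively
approximated by piecewise-affine limits with coverage at least `1 - ε`. -/
theorem stmt_18 {d : ℕ} (Φ : Set (Fin d → ℝ)) (hΦ : IsCompact Φ)
    (νmin νmax : (Fin d → ℝ) → ℝ)
    (hcmin : ContinuousOn νmin Φ) (hcmax : ContinuousOn νmax Φ)
    (hlt : ∀ φ ∈ Φ, νmin φ < νmax φ) :
    ∀ ε > (0 : ℝ), ∃ pmin pmax : (Fin d → ℝ) → ℝ,
      IsPWA pmin ∧ IsPWA pmax ∧
      ∀ φ ∈ Φ, νmin φ ≤ pmin φ ∧ pmin φ ≤ pmax φ ∧ pmax φ ≤ νmax φ ∧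
        1 - ε ≤ (pmax φ - pmin φ) / (νmax φ - νmin φ) := by
  intro ε hε
  obtain ⟨m, hm, hgap⟩ :=
    hΦ.exists_forall_le' (hcmax.sub hcmin) fun φ hφ => sub_pos.mpr (hlt φ hφ)
  obtain ⟨δ, hδ, h4δ⟩ : ∃ δ > 0, 4 * δ ≤ min 1 ε * m :=
    ⟨min 1 ε * m / 4, by positivity, by linarith⟩
  obtain ⟨pmin, hpmin, hmin⟩ := exists_isPWA_abs_sub_lt hΦ (hcmin.add continuousOn_const) hδ
  obtain ⟨pmax, hpmax, hmax⟩ := exists_isPWA_abs_sub_lt hΦ (hcmax.sub continuousOn_const) hδ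
  exact ⟨pmin, pmax, hpmin, hpmax, fun φ hφ =>
    bounds_and_coverage_of_abs_sub_lt hm (hgap φ hφ) h4δ (hmin φ hφ) (hmax φ hφ)⟩
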